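/- Let (G,μ) be a graph with a scale assignment μ : E(G) → ℕ on its internal edges. For a connected subgraph g, define the internal index i_g(μ) = min over internal edges of g of μ, and the external index e_g(μ) = max over external edges of g of μ. Call g 'high' if it is connected and e_g(μ) < i_g(μ). Then the set of high subgraphs of (G,μ) forms a forest: for any two high subgraphs g₁, g₂, either g₁ ⊆ g₂, or g₂ ⊆ g₁, or g₁ ∩ g₂ = ∅. -/
import Mathlib


/-- A multigraph: vertices, edges, and the two endpoints of each edge. -/
structure Multigraph where
  V : Type
  E : Type
  ends : E → V × V

namespace Multigraph

variable {G : Multigraph}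

/-- An edge is incident to a vertex. -/
def Inc (e : G.E) (v : G.V) : Prop := (G.ends e).1 = v ∨ (G.ends e).2 = v

/-- A subgraph of `G`: a set of vertices together with a set of internal edges,
all of whose endpoints lie in the chosen vertex set. -/
structure Sub (G : Multigraph) where
  verts : Set G.V
  edges : Set G.E
  fst_mem : ∀ e ∈ edges, (G.ends e).1 ∈ verts
  snd_mem : ∀ e ∈ edges, (G.ends e).2 ∈ verts

/-- An external edge of a subgraph: an edge of the ambient graph which is not internal
to the subgraph but is attached to one of its vertices. -/
def Sub.External (g : Sub G) (e : G.E) : Prop :=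
  e ∉ g.edges ∧ ∃ v ∈ g.verts, Inc e v

/-- One step of adjacency inside the subgraph (via an internal edge). -/
def Sub.Step (g : Sub G) (u w : G.V) : Prop :=
  ∃ e ∈ g.edges, Inc e u ∧ Inc e w

/-- Connectivity of a subgraph. -/
def Sub.Connected (g : Sub G) : Prop :=
  g.verts.Nonempty ∧ ∀ u ∈ g.verts, ∀ w ∈ g.verts, Relation.ReflTransGen g.Step u w

/-- Containment of subgraphs. -/
def Sub.le (g₁ g₂ : Sub G) : Prop := g₁.verts ⊆ g₂.verts ∧ g₁.edges ⊆ g₂.edges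

/-- The internal index `i_g(μ)`: the infimum of the scales of the internal edges of `g`. -/
noncomputable def Sub.iIdx (μ : G.E → ℕ) (g : Sub G) : ℕ∞ :=
  ⨅ e ∈ g.edges, (μ e : ℕ∞)

/-- The external index `e_g(μ)`: the supremum of the scales of the external edges of `g`. -/
noncomputable def Sub.eIdx (μ : G.E → ℕ) (g : Sub G) : ℕ∞ :=
  ⨆ e ∈ {e | g.External e}, (μ e : ℕ∞)

/-- A high subgraph: connected, and its external index is strictly smaller than
its internal index. -/
def Sub.High (μ : G.E → ℕ) (g : Sub G) : Prop :=
  g.Connected ∧ g.eIdx μ < g.iIdx μ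

end Multigraph


open Multigraph in
private lemma cross_lemma {G : Multigraph} (g : Sub G) (S : Set G.V) {u w : G.V}
    (h : Relation.ReflTransGen g.Step u w) (hu : u ∈ S) (hw : w ∉ S) :
    ∃ e ∈ g.edges, (∃ a ∈ S, Inc e a) ∧ ∃ b, Inc e b ∧ b ∉ S := by
  induction h with
  | refl => exact absurd hu hw
  | tail _ step ih =>
    rename_i x y _
    by_cases hx : x ∈ S
    · obtain ⟨e, he, hix, hiy⟩ := step
      exact ⟨e, he, ⟨x, hx, hix⟩, y, hiy, hw⟩
    · exact ih hx

open Multigraph in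
private lemma exists_ext {G : Multigraph} {g₁ g₂ : Sub G} (hc : g₂.Connected)
    (hv : ∃ v, v ∈ g₁.verts ∧ v ∈ g₂.verts) (hle : ¬ g₂.le g₁) :
    ∃ e, e ∈ g₂.edges ∧ g₁.External e := by
  by_cases hV : g₂.verts ⊆ g₁.verts
  · have hE : ¬ g₂.edges ⊆ g₁.edges := fun hE => hle ⟨hV, hE⟩
    obtain ⟨e, he, hne⟩ := Set.not_subset.mp hE
    exact ⟨e, he, hne, (G.ends e).1, hV (g₂.fst_mem e he), Or.inl rfl⟩
  · obtain ⟨w, hw2, hw1⟩ := Set.not_subset.mp hV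
    obtain ⟨v, hv1, hv2⟩ := hv
    obtain ⟨e, he, ⟨a, ha, hia⟩, b, hib, hb⟩ :=
      cross_lemma g₂ g₁.verts (hc.2 v hv2 w hw2) hv1 hw1
    refine ⟨e, he, ?_, a, ha, hia⟩
    intro heg
    rcases hib with h | h
    · exact hb (h ▸ g₁.fst_mem e heg)
    · exact hb (h ▸ g₁.snd_mem e heg)

open Multigraph in
private lemma iIdx_le_eIdx {G : Multigraph} {g₁ g₂ : Sub G} (μ : G.E → ℕ)
    {e : G.E} (he : e ∈ g₂.edges) (hx : g₁.External e) :
    g₂.iIdx μ ≤ g₁.eIdx μ :=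
  le_trans (iInf₂_le e he) (le_iSup₂ (f := fun e _ => (μ e : ℕ∞)) e hx)

open Multigraph in
/-- The set of high subgraphs of an assigned graph `(G, μ)` is a forest: two high
subgraphs are either nested or disjoint. -/
theorem high_subgraphs_form_forest {G : Multigraph} (μ : G.E → ℕ)
    (g₁ g₂ : Sub G) (h₁ : g₁.High μ) (h₂ : g₂.High μ) :
    g₁.le g₂ ∨ g₂.le g₁ ∨ (g₁.verts ∩ g₂.verts = ∅ ∧ g₁.edges ∩ g₂.edges = ∅) := by
  by_contra hcon
  push_neg at hcon
  obtain ⟨h12, h21, hdis⟩ := hcon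
  have hv : ∃ v, v ∈ g₁.verts ∧ v ∈ g₂.verts := by
    by_cases hV : g₁.verts ∩ g₂.verts = ∅
    · obtain ⟨e, he1, he2⟩ := hdis hV
      exact ⟨(G.ends e).1, g₁.fst_mem e he1, g₂.fst_mem e he2⟩
    · obtain ⟨v, hv1, hv2⟩ := Set.nonempty_iff_ne_empty.mpr hV
      exact ⟨v, hv1, hv2⟩
  obtain ⟨e₂, he₂, hx₂⟩ := exists_ext h₂.1 hv h21
  obtain ⟨e₁, he₁, hx₁⟩ := exists_ext h₁.1 (by tauto) h12
  have c1 : g₂.iIdx μ ≤ g₁.eIdx μ := iIdx_le_eIdx μ he₂ hx₂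
  have c2 : g₁.iIdx μ ≤ g₂.eIdx μ := iIdx_le_eIdx μ he₁ hx₁
  exact absurd ((c1.trans_lt h₁.2).trans_le (c2.trans h₂.2.le)) (lt_irrefl _)
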